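/- arXiv:2001.09701 — 4 statements merged into one kernel-verified Lean document; each statement's English description precedes it below -/
import Mathlib

section
/- Every B-invariant polynomial function on the space 𝔟 of upper triangular n×n matrices is a polynomial in the diagonal coordinate functions r_{11},...,r_{nn}; that is, ℂ[𝔟]^B ≅ ℂ[r_{11},...,r_{nn}]. -/
open Matrix

lemma aeval_eq_eval' {σ : Type*} (v : σ → ℂ) (p : MvPolynomial σ ℂ) :
    MvPolynomial.aeval v p = MvPolynomial.eval v p := by
  rw [MvPolynomial.aeval_def, MvPolynomial.eval]
  simp [MvPolynomial.eval₂Hom]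


/-- Every B-invariant polynomial function on the space of upper triangular
matrices is a polynomial in the diagonal coordinate functions: `ℂ[𝔟]^B ≅ ℂ[r₁₁,…,rₙₙ]`. -/
theorem B_invariants_of_borel (n : ℕ) (hn : 1 ≤ n)
    (F : Matrix (Fin n) (Fin n) ℂ → ℂ)
    (hpoly : ∃ P : MvPolynomial (Fin n × Fin n) ℂ,
      ∀ r : Matrix (Fin n) (Fin n) ℂ,
        F r = MvPolynomial.eval (fun p => r p.1 p.2) P)
    (hinv : ∀ b r : Matrix (Fin n) (Fin n) ℂ,
      b.BlockTriangular id → IsUnit b → r.BlockTriangular id →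
        F (b * r * b⁻¹) = F r) :
    ∃ Q : MvPolynomial (Fin n) ℂ,
      ∀ r : Matrix (Fin n) (Fin n) ℂ, r.BlockTriangular id →
        F r = MvPolynomial.eval (fun k => r k k) Q := by
  obtain ⟨P, hP⟩ := hpoly
  refine ⟨MvPolynomial.aeval
    (fun p : Fin n × Fin n => if p.1 = p.2 then MvPolynomial.X p.1 else 0) P, ?_⟩
  intro r hr
  set M : ℂ → Matrix (Fin n) (Fin n) ℂ :=
    fun t i j => t ^ ((j : ℕ) - (i : ℕ)) * r i j with hM
  set q : Polynomial ℂ := MvPolynomial.aeval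
    (fun p : Fin n × Fin n =>
      Polynomial.X ^ ((p.2 : ℕ) - (p.1 : ℕ)) * Polynomial.C (r p.1 p.2)) P with hq
  have hqt : ∀ t : ℂ, q.eval t = F (M t) := by
    intro t
    have h1 : (Polynomial.aeval t : Polynomial ℂ →ₐ[ℂ] ℂ).comp
        (MvPolynomial.aeval (fun p : Fin n × Fin n =>
          Polynomial.X ^ ((p.2 : ℕ) - (p.1 : ℕ)) * Polynomial.C (r p.1 p.2)))
        = MvPolynomial.aeval (fun p : Fin n × Fin n =>
            (Polynomial.aeval t) (Polynomial.X ^ ((p.2 : ℕ) - (p.1 : ℕ)) * Polynomial.C (r p.1 p.2))) :=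
      MvPolynomial.comp_aeval _ _
    have h2 := congrArg (fun φ => φ P) h1
    simp only [AlgHom.comp_apply] at h2
    have h3 : (Polynomial.aeval t) q = q.eval t := by
      rw [← Polynomial.coe_aeval_eq_eval]
    have h4 : (fun p : Fin n × Fin n =>
        (Polynomial.aeval t) (Polynomial.X ^ ((p.2 : ℕ) - (p.1 : ℕ)) * Polynomial.C (r p.1 p.2)))
        = fun p : Fin n × Fin n => M t p.1 p.2 := by
      funext p
      simp only [hM, _root_.map_mul, _root_.map_pow, Polynomial.aeval_X, Polynomial.aeval_C, Algebra.algebraMap_self_apply]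
    rw [hP (M t), ← h3, hq, h2, h4, aeval_eq_eval']
  have hconst : ∀ t : ℂ, t ≠ 0 → F (M t) = F r := by
    intro t ht
    set d : Fin n → ℂ := fun i => t ^ (n - (i : ℕ)) with hd
    have hd0 : ∀ i, d i ≠ 0 := fun i => pow_ne_zero _ ht
    have hinvd : (diagonal d)⁻¹ = diagonal (fun i => (d i)⁻¹) := by
      apply Matrix.inv_eq_right_inv
      rw [Matrix.diagonal_mul_diagonal]
      have hone : (fun i => d i * (d i)⁻¹) = fun _ => (1:ℂ) :=
        funext fun i => mul_inv_cancel₀ (hd0 i)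
      rw [hone, Matrix.diagonal_one]
    have hMt : M t = diagonal d * r * (diagonal d)⁻¹ := by
      rw [hinvd]
      funext i j
      rw [Matrix.mul_diagonal, Matrix.diagonal_mul]
      rcases le_or_gt (i : ℕ) (j : ℕ) with hij | hij
      · have hi := i.isLt; have hj := j.isLt
        have he : (n - (i : ℕ)) - (n - (j : ℕ)) = (j : ℕ) - (i : ℕ) := by omega
        show t ^ ((j : ℕ) - (i : ℕ)) * r i j = t ^ (n - (i : ℕ)) * r i j * (t ^ (n - (j : ℕ)))⁻¹
        rw [← he, pow_sub₀ t ht (by omega)]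
        ring
      · have hrij : r i j = 0 := hr (by simpa using hij)
        show t ^ ((j : ℕ) - (i : ℕ)) * r i j = t ^ (n - (i : ℕ)) * r i j * (t ^ (n - (j : ℕ)))⁻¹
        simp [hrij]
    rw [hMt]
    exact hinv (diagonal d) r (Matrix.blockTriangular_diagonal d)
      (Matrix.isUnit_diagonal.mpr (by
        rw [isUnit_iff_exists_inv]
        exact ⟨fun i => (d i)⁻¹, funext fun i => mul_inv_cancel₀ (hd0 i)⟩)) hr
  -- q is constant equal to F r
  have hqC : q = Polynomial.C (F r) := by
    by_contra hne
    have : ({x : ℂ | (q - Polynomial.C (F r)).IsRoot x}).Infinite := by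
      apply Set.Infinite.mono (s := ({0} : Set ℂ)ᶜ)
      · intro x hx
        simp only [Set.mem_compl_iff, Set.mem_singleton_iff] at hx
        simp [Polynomial.IsRoot, hqt x, hconst x hx]
      · exact (Set.finite_singleton (0:ℂ)).infinite_compl
    have h0 := Polynomial.eq_zero_of_infinite_isRoot _ this
    exact hne (by linear_combination (norm := ring_nf) h0)
  -- evaluate at 0
  have h0 : F (M 0) = F r := by
    rw [← hqt 0, hqC, Polynomial.eval_C]
  have hM0 : (fun p : Fin n × Fin n => if p.1 = p.2 then r p.1 p.1 else (0:ℂ))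
      = fun p => M 0 p.1 p.2 := by
    funext p
    obtain ⟨i, j⟩ := p
    simp only [hM]
    rcases lt_trichotomy (i : ℕ) (j : ℕ) with h | h | h
    · have : (j : ℕ) - (i : ℕ) ≠ 0 := by omega
      rw [if_neg (by intro hc; rw [hc] at h; omega), zero_pow this, zero_mul]
    · have hij : i = j := Fin.ext h
      subst hij
      simp
    · have hrij : r i j = 0 := hr (by simpa using h)
      rw [if_neg (by intro hc; rw [hc] at h; omega), hrij, mul_zero]
  have h5 : (MvPolynomial.aeval (fun k => r k k) :
        MvPolynomial (Fin n) ℂ →ₐ[ℂ] ℂ).comp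
      (MvPolynomial.aeval (fun p : Fin n × Fin n =>
        if p.1 = p.2 then MvPolynomial.X p.1 else 0))
      = MvPolynomial.aeval (fun p : Fin n × Fin n =>
          (MvPolynomial.aeval (fun k => r k k))
            (if p.1 = p.2 then MvPolynomial.X p.1 else 0)) :=
    MvPolynomial.comp_aeval _ _
  have h6 := congrArg (fun φ => φ P) h5
  simp only [AlgHom.comp_apply] at h6
  rw [← aeval_eq_eval', h6]
  have h7 : (fun p : Fin n × Fin n =>
      (MvPolynomial.aeval (fun k => r k k))
        (if p.1 = p.2 then MvPolynomial.X p.1 else (0 : MvPolynomial (Fin n) ℂ)))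
      = fun p : Fin n × Fin n => M 0 p.1 p.2 := by
    rw [← hM0]
    funext p
    by_cases hpe : p.1 = p.2 <;> simp [hpe]
  rw [h7, aeval_eq_eval', ← hP (M 0), h0]
end

section
/- Every B-invariant polynomial function on 𝔟* ≅ 𝔤/𝔲⁺ (with the conjugation action of B) is a polynomial in the trace function; that is, ℂ[𝔟*]^B ≅ ℂ[tr(s)]. -/
/-!
Conjugating by the torus element `diag(t⁰, t¹, …)` scales the entry `(i, j)` by `t^(i-j)`;
letting `t → 0` (a polynomial `F` is continuous) and discarding the strictly upper part shows
that an invariant `F` only sees the diagonal. On `diag(v) + E_{ki}` (with `i < k`), conjugation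
by the transvection `1 + x E_{ik}` moves `x` from `v_k` to `v_i` up to a strictly upper term,
and `F(diag(v) + E_{ki}) = F(diag(v))` by the first step. Hence `v ↦ F(diag v)` is invariant
under all transfers `x (e_i - e_k)`, so it depends only on `∑ v = tr`.
-/

open Matrix

theorem Function.Periodic.finset_sum_period {α β ι : Type*} [AddCommMonoid α] {f : α → β}
    {s : Finset ι} {c : ι → α} (h : ∀ i ∈ s, Function.Periodic f (c i)) :
    Function.Periodic f (∑ i ∈ s, c i) :=
  Finset.sum_induction c _ (fun _ _ ha hb => ha.add_period hb)
    (Function.periodic_with_period_zero f) h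

theorem apply_eq_apply_single_sum_of_periodic {ι M X : Type*} [Fintype ι] [DecidableEq ι] [AddCommGroup M]
    {f : (ι → M) → X} (i₀ : ι)
    (hf : ∀ k ≠ i₀, ∀ x : M, Function.Periodic f (Pi.single i₀ x - Pi.single k x))
    (v : ι → M) :
    f v = f (Pi.single i₀ (∑ k, v k)) := by
  have hper : Function.Periodic f (∑ k, (Pi.single i₀ (v k) - Pi.single k (v k))) := by
    refine Function.Periodic.finset_sum_period fun k _ => ?_
    obtain rfl | hk := eq_or_ne k i₀
    · simpa only [sub_self] using Function.periodic_with_period_zero f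
    · exact hf k hk (v k)
  have hdecomp :
      Pi.single i₀ (∑ k, v k) = v + ∑ k, (Pi.single i₀ (v k) - Pi.single k (v k)) := by
    rw [Finset.sum_sub_distrib, Finset.univ_sum_single, add_sub_cancel]
    exact map_sum (AddMonoidHom.single (fun _ : ι => M) i₀) v _
  rw [hdecomp, hper v]

theorem MvPolynomial.exists_polynomial_eval_eq_eval {σ R : Type*} [CommSemiring R]
    (P : MvPolynomial σ R) (g : σ → Polynomial R) :
    ∃ Q : Polynomial R, ∀ t, Q.eval t = MvPolynomial.eval (fun i => (g i).eval t) P :=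
  ⟨MvPolynomial.aeval g P, fun t => by
    rw [← Polynomial.coe_aeval_eq_eval, MvPolynomial.comp_aeval_apply]
    rfl⟩

namespace Matrix

variable {ι R : Type*} [DecidableEq ι] [Fintype ι]

theorem single_mul_diagonal [Semiring R] (i j : ι) (c : R) (d : ι → R) :
    single i j c * diagonal d = single i j (c * d j) := by
  ext a b
  simp only [mul_diagonal, single, of_apply]
  split_ifs <;> simp_all

theorem diagonal_mul_single [Semiring R] (i j : ι) (c : R) (d : ι → R) :
    diagonal d * single i j c = single i j (d i * c) := by
  ext a b
  simp only [diagonal_mul, single, of_apply]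
  split_ifs <;> simp_all

theorem transvection_mul_diagonal_add_single [CommRing R] {i k : ι}
    (hik : i ≠ k) (v : ι → R) (x : R) :
    transvection i k x * (diagonal v + single k i 1) =
      (diagonal (v + (Pi.single i x - Pi.single k x)) + single k i 1 +
        single i k (x * (v k - v i - x))) * transvection i k x := by
  have hdiag : diagonal (v + (Pi.single i x - Pi.single k x)) =
      diagonal v + (single i i x - single k k x) := by
    rw [← diagonal_single, ← diagonal_single, diagonal_sub, diagonal_add]
    rfl
  simp only [hdiag, transvection, add_mul, mul_add, sub_mul, one_mul, mul_one, single_mul_diagonal,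
    diagonal_mul_single, single_mul_single_same, single_mul_single_of_ne _ _ _ _ hik.symm]
  rw [show x * v k = x * (v k - v i - x) + v i * x + x * x by ring, single_add, single_add]
  abel

end Matrix

section BorelDual

variable {𝕜 X : Type*} {n : ℕ} {F : Matrix (Fin n) (Fin n) 𝕜 → X}

def IsInvariantModStrictUpper [Zero 𝕜] [Add 𝕜] (F : Matrix (Fin n) (Fin n) 𝕜 → X) : Prop :=
  ∀ s u : Matrix (Fin n) (Fin n) 𝕜, (∀ i j, j ≤ i → u i j = 0) → F (s + u) = F s

def IsBorelInvariant [CommRing 𝕜] (F : Matrix (Fin n) (Fin n) 𝕜 → X) : Prop :=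
  ∀ b s : Matrix (Fin n) (Fin n) 𝕜, b.BlockTriangular id → IsUnit b → F (b * s * b⁻¹) = F s

theorem IsInvariantModStrictUpper.apply_eq_of_lower_eq [AddCommGroup 𝕜]
    (hU : IsInvariantModStrictUpper F) {s s' : Matrix (Fin n) (Fin n) 𝕜}
    (h : ∀ i j, j ≤ i → s i j = s' i j) : F s = F s' := by
  simpa only [add_sub_cancel] using hU s' (s - s') fun i j hji => by simp [h i j hji]

/-- Above the diagonal the exponent truncates to `0`; those entries are irrelevant modulo `𝔲⁺`. -/
def scaleLower [Monoid 𝕜] (t : 𝕜) (s : Matrix (Fin n) (Fin n) 𝕜) : Matrix (Fin n) (Fin n) 𝕜 :=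
  of fun i j => t ^ ((i : ℕ) - j) * s i j

theorem scaleLower_zero_apply [MonoidWithZero 𝕜] (s : Matrix (Fin n) (Fin n) 𝕜) {i j : Fin n}
    (hji : j ≤ i) : scaleLower 0 s i j = diagonal s.diag i j := by
  obtain hlt | rfl := hji.lt_or_eq
  · simp [scaleLower, hlt.ne', Nat.sub_ne_zero_of_lt (Fin.lt_def.mp hlt)]
  · simp [scaleLower]

theorem IsBorelInvariant.apply_scaleLower [Field 𝕜] (hB : IsBorelInvariant F)
    (hU : IsInvariantModStrictUpper F) {t : 𝕜} (ht : t ≠ 0) (s : Matrix (Fin n) (Fin n) 𝕜) :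
    F (scaleLower t s) = F s := by
  set d : Matrix (Fin n) (Fin n) 𝕜 := diagonal fun i => t ^ (i : ℕ)
  have hd_inv : d⁻¹ = diagonal fun i : Fin n => (t ^ (i : ℕ))⁻¹ :=
    inv_eq_left_inv <| by simp [d, diagonal_mul_diagonal, ht]
  have hd_unit : IsUnit d := by
    simp [d, isUnit_iff_isUnit_det, det_diagonal, Finset.prod_ne_zero_iff, ht]
  rw [← hB d s (blockTriangular_diagonal _) hd_unit]
  refine hU.apply_eq_of_lower_eq fun i j hji => ?_
  simp only [hd_inv, mul_diagonal, d, diagonal_mul, scaleLower, of_apply,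
    pow_sub₀ t ht (Fin.le_def.mp hji)]
  ring

theorem IsBorelInvariant.apply_eq_apply_diagonal_diag [NontriviallyNormedField 𝕜]
    [TopologicalSpace X] [T2Space X] (hB : IsBorelInvariant F) (hU : IsInvariantModStrictUpper F)
    (hF : Continuous F) (s : Matrix (Fin n) (Fin n) 𝕜) :
    F s = F (diagonal s.diag) := by
  have hcurve : Continuous fun t : 𝕜 => F (scaleLower t s) := hF.comp <| by
    unfold scaleLower
    fun_prop
  have hconst := hcurve.ext_on (dense_compl_singleton 0) continuous_const
    fun t ht => hB.apply_scaleLower hU ht s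
  rw [← congrFun hconst 0]
  exact hU.apply_eq_of_lower_eq fun i j => scaleLower_zero_apply s

theorem IsBorelInvariant.periodic_diagonal [NontriviallyNormedField 𝕜]
    [TopologicalSpace X] [T2Space X] (hB : IsBorelInvariant F) (hU : IsInvariantModStrictUpper F)
    (hF : Continuous F) {i k : Fin n} (hik : i < k) (x : 𝕜) :
    Function.Periodic (fun v => F (diagonal v)) (Pi.single i x - Pi.single k x) := by
  intro v
  have hlower : ∀ w : Fin n → 𝕜, F (diagonal w + single k i 1) = F (diagonal w) := fun w => by
    rw [hB.apply_eq_apply_diagonal_diag hU hF, diag_add, diag_diagonal,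
      diag_single_of_ne _ _ _ hik.ne', add_zero]
  have hupper : ∀ a b, b ≤ a → single i k (x * (v k - v i - x)) a b = 0 := fun a b hba => by
    simp only [single, of_apply]
    exact if_neg fun h => (h.1 ▸ h.2 ▸ hba).not_gt hik
  have hdet : IsUnit (transvection i k x).det := by
    rw [det_transvection_of_ne _ _ hik.ne]
    exact isUnit_one
  have hconj : transvection i k x * (diagonal v + single k i 1) * (transvection i k x)⁻¹ =
      diagonal (v + (Pi.single i x - Pi.single k x)) + single k i 1 +
        single i k (x * (v k - v i - x)) := by
    rw [transvection_mul_diagonal_add_single hik.ne, mul_nonsing_inv_cancel_right _ _ hdet]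
  calc F (diagonal (v + (Pi.single i x - Pi.single k x)))
      = F (diagonal (v + (Pi.single i x - Pi.single k x)) + single k i 1 +
          single i k (x * (v k - v i - x))) := by rw [hU _ _ hupper, hlower]
    _ = F (diagonal v + single k i 1) := by
      rw [← hconj, hB _ _ (blockTriangular_transvection hik.le x)
        ((isUnit_iff_isUnit_det _).mpr hdet)]
    _ = F (diagonal v) := hlower v

end BorelDual

/-- Every B-invariant polynomial function on `𝔟* ≅ 𝔤/𝔲⁺` (well defined on
the quotient by the strictly upper triangular matrices, invariant under conjugation by
invertible upper triangular matrices) is a polynomial in the trace. -/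
theorem B_invariants_of_borel_dual (n : ℕ) (hn : 1 ≤ n)
    (F : Matrix (Fin n) (Fin n) ℂ → ℂ)
    (hpoly : ∃ P : MvPolynomial (Fin n × Fin n) ℂ,
      ∀ s : Matrix (Fin n) (Fin n) ℂ,
        F s = MvPolynomial.eval (fun p => s p.1 p.2) P)
    (hdesc : ∀ s u : Matrix (Fin n) (Fin n) ℂ,
      (∀ ι γ : Fin n, γ ≤ ι → u ι γ = 0) → F (s + u) = F s)
    (hinv : ∀ b s : Matrix (Fin n) (Fin n) ℂ,
      b.BlockTriangular id → IsUnit b → F (b * s * b⁻¹) = F s) :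
    ∃ Q : Polynomial ℂ,
      ∀ s : Matrix (Fin n) (Fin n) ℂ, F s = Q.eval s.trace := by
  obtain ⟨P, hP⟩ := hpoly
  have hU : IsInvariantModStrictUpper F := hdesc
  have hB : IsBorelInvariant F := hinv
  have hF : Continuous F := by
    rw [funext hP]
    exact (MvPolynomial.continuous_eval P).comp (by fun_prop)
  let i₀ : Fin n := ⟨0, hn⟩
  obtain ⟨Q, hQ⟩ := P.exists_polynomial_eval_eq_eval fun p =>
    diagonal (Pi.single i₀ Polynomial.X) p.1 p.2
  refine ⟨Q, fun s => ?_⟩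
  have hper : ∀ k ≠ i₀, ∀ x : ℂ,
      Function.Periodic (fun v => F (diagonal v)) (Pi.single i₀ x - Pi.single k x) :=
    fun k hk x => hB.periodic_diagonal hU hF (lt_of_le_of_ne (Nat.zero_le _) hk.symm) x
  rw [hB.apply_eq_apply_diagonal_diag hU hF s, apply_eq_apply_single_sum_of_periodic i₀ hper, hQ, hP]
  refine congrArg (MvPolynomial.eval · P) (funext fun p => ?_)
  simp only [diagonal_apply, Pi.single_apply, trace, diag]
  split_ifs <;> simp
end

section
/- For any subset J ⊆ {1,...,n} the polynomial g_J(r,s,i,j) = tr(ℓ^J(r) · s) on T*(𝔟 × ℂⁿ) is B-invariant: g_J(brb⁻¹, bsb⁻¹, bi, jb⁻¹) = g_J(r,s,i,j) for all b ∈ B. -/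
open Matrix

/-- `ℓ^J(r) = ∏_{k∈J} (r − r_{kk}·I)`, realized as the evaluation at `r` of the
(commutative) polynomial `∏_{k∈J} (X − r_{kk})`. -/
noncomputable def ellJ {n : ℕ} (J : Finset (Fin n)) (r : Matrix (Fin n) (Fin n) ℂ) :
    Matrix (Fin n) (Fin n) ℂ :=
  Polynomial.aeval r (∏ k ∈ J, (Polynomial.X - Polynomial.C (r k k)))

lemma diag_mul_bt {n : ℕ} {A B : Matrix (Fin n) (Fin n) ℂ}
    (hA : A.BlockTriangular id) (hB : B.BlockTriangular id) (k : Fin n) :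
    (A * B) k k = A k k * B k k := by
  rw [Matrix.mul_apply]
  refine Finset.sum_eq_single k (fun j _ hj => ?_) (by simp)
  rcases lt_or_gt_of_ne hj with h | h
  · rw [hA h, zero_mul]
  · rw [hB h, mul_zero]

lemma aeval_conj {n : ℕ} (b r : Matrix (Fin n) (Fin n) ℂ) (hbu : IsUnit b)
    (p : Polynomial ℂ) :
    Polynomial.aeval (b * r * b⁻¹) p = b * Polynomial.aeval r p * b⁻¹ := by
  have hd : IsUnit b.det := (Matrix.isUnit_iff_isUnit_det b).mp hbu
  have h1 : b * b⁻¹ = 1 := Matrix.mul_nonsing_inv b hd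
  have h2 : b⁻¹ * b = 1 := Matrix.nonsing_inv_mul b hd
  induction p using Polynomial.induction_on' with
  | add p q hp hq => simp [map_add, hp, hq, Matrix.mul_add, Matrix.add_mul]
  | monomial m a =>
    have hpow : ∀ m : ℕ, (b * r * b⁻¹) ^ m = b * r ^ m * b⁻¹ := by
      intro m
      induction m with
      | zero => simp [h1]
      | succ m ih =>
        rw [pow_succ, ih, pow_succ]
        calc b * r ^ m * b⁻¹ * (b * r * b⁻¹)
            = b * r ^ m * (b⁻¹ * b) * r * b⁻¹ := by noncomm_ring
          _ = b * (r ^ m * r) * b⁻¹ := by rw [h2]; noncomm_ring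
    rw [Polynomial.aeval_monomial, Polynomial.aeval_monomial, hpow]
    calc (algebraMap ℂ _) a * (b * r ^ m * b⁻¹)
        = (algebraMap ℂ _) a * b * r ^ m * b⁻¹ := by noncomm_ring
      _ = b * ((algebraMap ℂ _) a * r ^ m) * b⁻¹ := by
          rw [Algebra.commutes]; noncomm_ring

/-- The polynomial `g_J(r,s,i,j) = tr(ℓ^J(r) s)` is `B`-invariant. -/
theorem gJ_B_invariant (n : ℕ) (hn : 1 ≤ n)
    (b r s : Matrix (Fin n) (Fin n) ℂ)
    (hb : b.BlockTriangular id) (hbu : IsUnit b)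
    (hr : r.BlockTriangular id) (J : Finset (Fin n)) :
    (ellJ J (b * r * b⁻¹) * (b * s * b⁻¹)).trace = (ellJ J r * s).trace := by
  have hd : IsUnit b.det := (Matrix.isUnit_iff_isUnit_det b).mp hbu
  have h1 : b * b⁻¹ = 1 := Matrix.mul_nonsing_inv b hd
  have h2 : b⁻¹ * b = 1 := Matrix.nonsing_inv_mul b hd
  haveI : Invertible b := b.invertibleOfIsUnitDet hd
  have hbi : (b⁻¹).BlockTriangular id := by
    exact Matrix.blockTriangular_inv_of_blockTriangular hb
  have hdiag : ∀ k, (b * r * b⁻¹) k k = r k k := by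
    intro k
    have hbk : b k k * b⁻¹ k k = 1 := by
      have := diag_mul_bt hb hbi k
      rw [h1] at this
      simpa using this.symm
    rw [diag_mul_bt (hb.mul hr) hbi k, diag_mul_bt hb hr k]
    calc b k k * r k k * b⁻¹ k k = b k k * b⁻¹ k k * r k k := by ring
      _ = r k k := by rw [hbk, one_mul]
  have hell : ellJ J (b * r * b⁻¹) = b * ellJ J r * b⁻¹ := by
    unfold ellJ
    simp_rw [hdiag]
    exact aeval_conj b r hbu _
  rw [hell]
  have : b * ellJ J r * b⁻¹ * (b * s * b⁻¹) = b * (ellJ J r * s) * b⁻¹ := by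
    calc b * ellJ J r * b⁻¹ * (b * s * b⁻¹)
        = b * ellJ J r * (b⁻¹ * b) * s * b⁻¹ := by noncomm_ring
      _ = b * (ellJ J r * s) * b⁻¹ := by rw [h2]; noncomm_ring
  rw [this, Matrix.trace_mul_cycle, ← Matrix.mul_assoc, h2, Matrix.one_mul]
end

section
/- For each ι ∈ {1,...,n}, the rational function h_ι(r) = tr(ℓ^{[n]∖{ι}}(r) · r) / tr(ℓ^{[n]∖{ι}}(r)) is B-invariant under conjugation: h_ι(b r b⁻¹) = h_ι(r) for all b ∈ B, wherever the denominator is nonzero. Moreover, when r has pairwise distinct diagonal entries, h_ι(r) = r_{ιι}. -/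
open Matrix

lemma diag_mul_tri {n : ℕ} {A B : Matrix (Fin n) (Fin n) ℂ} (hA : A.BlockTriangular id)
    (hB : B.BlockTriangular id) (i : Fin n) : (A * B) i i = A i i * B i i := by
  rw [Matrix.mul_apply, Finset.sum_eq_single i]
  · intro j _ hj
    rcases lt_or_gt_of_ne hj with h | h
    · rw [hA h, zero_mul]
    · rw [hB h, mul_zero]
  · intro h; exact absurd (Finset.mem_univ i) h

lemma aeval_tri {n : ℕ} {r : Matrix (Fin n) (Fin n) ℂ} (hr : r.BlockTriangular id)
    (p : Polynomial ℂ) : (Polynomial.aeval r p).BlockTriangular id ∧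
      ∀ i, (Polynomial.aeval r p) i i = p.eval (r i i) := by
  induction p using Polynomial.induction_on with
  | C a =>
    constructor
    · simpa [Polynomial.aeval_C, Matrix.algebraMap_eq_diagonal] using
        Matrix.blockTriangular_diagonal (b := (id : Fin n → Fin n)) _
    · intro i; simp [Polynomial.aeval_C, Matrix.algebraMap_eq_diagonal]
  | add p q hp hq =>
    refine ⟨by simpa [map_add] using hp.1.add hq.1, fun i => ?_⟩
    simp [map_add, hp.2 i, hq.2 i]
  | monomial k a ih =>
    have hrw : Polynomial.C a * Polynomial.X ^ (k + 1)
        = (Polynomial.C a * Polynomial.X ^ k) * Polynomial.X := by ring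
    rw [hrw]
    refine ⟨by simpa [_root_.map_mul] using ih.1.mul (by simpa using hr), fun i => ?_⟩
    rw [_root_.map_mul]
    rw [diag_mul_tri ih.1 (by simpa using hr) i, ih.2 i]
    simp [mul_assoc]

lemma conj_aeval {n : ℕ} (b x : Matrix (Fin n) (Fin n) ℂ) (hbu : IsUnit b)
    (p : Polynomial ℂ) :
    Polynomial.aeval (b * x * b⁻¹) p = b * Polynomial.aeval x p * b⁻¹ := by
  obtain ⟨u, rfl⟩ := hbu
  rw [Polynomial.aeval_eq_sum_range, Polynomial.aeval_eq_sum_range, Finset.mul_sum,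
    Finset.sum_mul]
  refine Finset.sum_congr rfl fun k _ => ?_
  rw [← Matrix.coe_units_inv u, u.conj_pow, Matrix.coe_units_inv]
  rw [Matrix.mul_smul, Matrix.smul_mul]

/-- The rational function
`h_ι(r) = tr(ℓ^{[n]∖{ι}}(r) r) / tr(ℓ^{[n]∖{ι}}(r))` is invariant under conjugation by
invertible upper triangular matrices wherever the denominator is nonzero; moreover when
the diagonal entries of `r` are pairwise distinct, `h_ι(r) = r_{ιι}`. -/
theorem h_iota_B_invariant (n : ℕ) (hn : 1 ≤ n) (ι : Fin n)
    (b r : Matrix (Fin n) (Fin n) ℂ)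
    (hb : b.BlockTriangular id) (hbu : IsUnit b)
    (hr : r.BlockTriangular id)
    (hden : (ellJ (Finset.univ.erase ι) r).trace ≠ 0) :
    ((ellJ (Finset.univ.erase ι) (b * r * b⁻¹) * (b * r * b⁻¹)).trace /
        (ellJ (Finset.univ.erase ι) (b * r * b⁻¹)).trace
      = (ellJ (Finset.univ.erase ι) r * r).trace /
        (ellJ (Finset.univ.erase ι) r).trace) ∧
    (Function.Injective (fun k : Fin n => r k k) →
      (ellJ (Finset.univ.erase ι) r * r).trace /
        (ellJ (Finset.univ.erase ι) r).trace = r ι ι) := by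
  set J := Finset.univ.erase ι with hJ
  have hbdet : IsUnit b.det := (Matrix.isUnit_iff_isUnit_det b).mp hbu
  have hbinv : b * b⁻¹ = 1 := Matrix.mul_nonsing_inv b hbdet
  have hinvb : b⁻¹ * b = 1 := Matrix.nonsing_inv_mul b hbdet
  haveI : Invertible b := hbu.invertible
  have hbi : (b⁻¹).BlockTriangular id := Matrix.blockTriangular_inv_of_blockTriangular hb
  -- diagonal of conjugate
  have hone : ∀ i : Fin n, b i i * b⁻¹ i i = 1 := by
    intro i
    have := diag_mul_tri hb hbi i
    rw [hbinv] at this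
    simpa using this.symm
  have hcdiag : ∀ i : Fin n, (b * r * b⁻¹) i i = r i i := by
    intro i
    rw [diag_mul_tri (hb.mul hr) hbi i, diag_mul_tri hb hr i]
    have : b i i * r i i * b⁻¹ i i = r i i * (b i i * b⁻¹ i i) := by ring
    rw [this, hone i, mul_one]
  -- conjugation commutes with ellJ
  have hconj : ellJ J (b * r * b⁻¹) = b * ellJ J r * b⁻¹ := by
    unfold ellJ
    have hp : (∏ k ∈ J, (Polynomial.X - Polynomial.C ((b * r * b⁻¹) k k)))
        = ∏ k ∈ J, (Polynomial.X - Polynomial.C (r k k)) := by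
      refine Finset.prod_congr rfl fun k _ => ?_
      rw [hcdiag k]
    rw [hp, conj_aeval b r hbu]
  have htrace_conj : ∀ M : Matrix (Fin n) (Fin n) ℂ, (b * M * b⁻¹).trace = M.trace := by
    intro M
    rw [Matrix.trace_mul_comm, ← Matrix.mul_assoc, hinvb, Matrix.one_mul]
  -- part 1
  have part1 : (ellJ J (b * r * b⁻¹) * (b * r * b⁻¹)).trace /
        (ellJ J (b * r * b⁻¹)).trace
      = (ellJ J r * r).trace / (ellJ J r).trace := by
    rw [hconj]
    have hnum : b * ellJ J r * b⁻¹ * (b * r * b⁻¹) = b * (ellJ J r * r) * b⁻¹ := by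
      calc b * ellJ J r * b⁻¹ * (b * r * b⁻¹)
          = b * ellJ J r * (b⁻¹ * b) * (r * b⁻¹) := by
            simp only [Matrix.mul_assoc]
        _ = b * (ellJ J r * r) * b⁻¹ := by
            rw [hinvb]; simp only [Matrix.mul_one, Matrix.mul_assoc]
    rw [hnum, htrace_conj, htrace_conj]
  refine ⟨part1, fun _ => ?_⟩
  -- part 2 : compute traces
  obtain ⟨htriJ, hdiagJ⟩ := aeval_tri hr (∏ k ∈ J, (Polynomial.X - Polynomial.C (r k k)))
  have htriJ' : (ellJ J r).BlockTriangular id := htriJ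
  have hdiag : ∀ i : Fin n, ellJ J r i i = ∏ k ∈ J, (r i i - r k k) := by
    intro i
    rw [ellJ, hdiagJ i]
    simp [Polynomial.eval_prod]
  have hzero : ∀ i : Fin n, i ≠ ι → ellJ J r i i = 0 := by
    intro i hi
    rw [hdiag i]
    exact Finset.prod_eq_zero (Finset.mem_erase.mpr ⟨hi, Finset.mem_univ i⟩) (by ring)
  have htr1 : (ellJ J r).trace = ellJ J r ι ι := by
    rw [Matrix.trace]
    rw [Finset.sum_eq_single ι]
    · rfl
    · intro i _ hi; exact hzero i hi
    · intro h; exact absurd (Finset.mem_univ ι) h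
  have htr2 : (ellJ J r * r).trace = ellJ J r ι ι * r ι ι := by
    rw [Matrix.trace]
    rw [Finset.sum_eq_single ι]
    · exact diag_mul_tri htriJ' hr ι
    · intro i _ hi
      rw [Matrix.diag_apply, diag_mul_tri htriJ' hr i, hzero i hi, zero_mul]
    · intro h; exact absurd (Finset.mem_univ ι) h
  rw [htr2, htr1]
  have hne : ellJ J r ι ι ≠ 0 := by rwa [htr1] at hden
  field_simp
end
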